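/- arXiv:1907.07643 — 2 statements merged into one kernel-verified Lean document; each statement's English description precedes it below -/
import Mathlib

section
/- Finite-time Lyapunov comparison theorem: let c > 0 and α ∈ (0,1), and let y : [0,∞) → ℝ be a differentiable function with y(t) ≥ 0 for all t ≥ 0, such that y'(t) + c·y(t)^α ≤ 0 for every t ≥ 0 with y(t) > 0. Then y(t) = 0 for all t ≥ y(0)^{1−α}/(c·(1−α)). -/
/-- Finite-time Lyapunov comparison theorem: if `y ≥ 0` is differentiable on `[0,∞)`
and satisfies `y' + c·y^α ≤ 0` whenever `y > 0`, with `c > 0` and `α ∈ (0,1)`,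
then `y` vanishes for all `t ≥ y(0)^{1-α}/(c(1-α))`. -/
theorem finite_time_lyapunov
    (c α : ℝ) (hc : 0 < c) (hα : α ∈ Set.Ioo (0 : ℝ) 1)
    (y y' : ℝ → ℝ)
    (hderiv : ∀ t : ℝ, 0 ≤ t → HasDerivAt y (y' t) t)
    (hnonneg : ∀ t : ℝ, 0 ≤ t → 0 ≤ y t)
    (hineq : ∀ t : ℝ, 0 ≤ t → 0 < y t → y' t + c * y t ^ α ≤ 0) :
    ∀ t : ℝ, (y 0) ^ (1 - α) / (c * (1 - α)) ≤ t → y t = 0 := by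
  obtain ⟨hα0, hα1⟩ := hα
  have h1α : 0 < 1 - α := by linarith
  -- persistence of zeros: once y hits zero it cannot become positive later
  have key : ∀ a b : ℝ, 0 ≤ a → a ≤ b → y a = 0 → ¬ (0 < y b) := by
    intro a b ha hab hya hyb
    have hb : 0 ≤ b := ha.trans hab
    set S : Set ℝ := Set.Icc a b ∩ y ⁻¹' {0} with hS
    have hSsubIcc : S ⊆ Set.Icc a b := Set.inter_subset_left
    have hSne : S.Nonempty := ⟨a, ⟨le_refl a, hab⟩, hya⟩
    have hSbdd : BddAbove S := ⟨b, fun u hu => (hSsubIcc hu).2⟩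
    have hycont : ContinuousOn y (Set.Icc a b) := fun u hu =>
      ((hderiv u (ha.trans hu.1)).continuousAt).continuousWithinAt
    have hSclosed : IsClosed S :=
      hycont.preimage_isClosed_of_isClosed isClosed_Icc isClosed_singleton
    set s := sSup S with hs
    have hsmem : s ∈ S := hSclosed.csSup_mem hSne hSbdd
    have hsIcc : s ∈ Set.Icc a b := hSsubIcc hsmem
    have hys : y s = 0 := hsmem.2
    have hsb : s < b := lt_of_le_of_ne hsIcc.2 (by
      intro h; rw [h] at hys; exact absurd hys (ne_of_gt hyb))
    have hposIoc : ∀ u ∈ Set.Ioc s b, 0 < y u := by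
      intro u hu
      rcases lt_or_eq_of_le (hnonneg u ((ha.trans hsIcc.1).trans hu.1.le)) with h | h
      · exact h
      · exfalso
        have : u ∈ S := ⟨⟨hsIcc.1.trans hu.1.le, hu.2⟩, h.symm⟩
        exact absurd (le_csSup hSbdd this) (not_le_of_gt hu.1)
    have hanti : StrictAntiOn y (Set.Icc s b) := by
      apply strictAntiOn_of_deriv_neg (convex_Icc s b)
      · exact fun u hu => ((hderiv u ((ha.trans hsIcc.1).trans hu.1)).continuousAt).continuousWithinAt
      · intro x hx
        rw [interior_Icc] at hx
        have hx0 : 0 ≤ x := (ha.trans hsIcc.1).trans hx.1.le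
        have hyx : 0 < y x := hposIoc x ⟨hx.1, hx.2.le⟩
        rw [(hderiv x hx0).deriv]
        have h1 := hineq x hx0 hyx
        have h2 : 0 < c * y x ^ α := mul_pos hc (Real.rpow_pos_of_pos hyx α)
        linarith
    have : y b < y s := hanti (Set.left_mem_Icc.2 hsb.le) (Set.right_mem_Icc.2 hsb.le) hsb
    rw [hys] at this
    exact absurd (hnonneg b hb) (not_le_of_gt this)
  -- main argument
  intro t ht
  have hT0 : (0:ℝ) ≤ y 0 ^ (1 - α) / (c * (1 - α)) :=
    div_nonneg (Real.rpow_nonneg (hnonneg 0 le_rfl) _) (mul_pos hc h1α).le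
  have ht0 : 0 ≤ t := hT0.trans ht
  by_contra h
  have hyt : 0 < y t := lt_of_le_of_ne (hnonneg t ht0) (Ne.symm h)
  have hpos : ∀ u ∈ Set.Icc (0:ℝ) t, 0 < y u := by
    intro u hu
    rcases lt_or_eq_of_le (hnonneg u hu.1) with h' | h'
    · exact h'
    · exact absurd hyt (key u t hu.1 hu.2 h'.symm)
  set g : ℝ → ℝ := fun u => y u ^ (1 - α) + c * (1 - α) * u with hg
  have hgderiv : ∀ u ∈ Set.Icc (0:ℝ) t,
      HasDerivAt g (y' u * (1 - α) * y u ^ (1 - α - 1) + c * (1 - α)) u := by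
    intro u hu
    have h1 : HasDerivAt (fun v => y v ^ (1 - α)) (y' u * (1 - α) * y u ^ (1 - α - 1)) u :=
      (hderiv u hu.1).rpow_const (Or.inl (hpos u hu).ne')
    have h2 : HasDerivAt (fun v => c * (1 - α) * v) (c * (1 - α)) u := by
      simpa using (hasDerivAt_id u).const_mul (c * (1 - α))
    exact h1.add h2
  have hanti : AntitoneOn g (Set.Icc (0:ℝ) t) := by
    apply antitoneOn_of_deriv_nonpos (convex_Icc 0 t)
    · exact fun u hu => ((hgderiv u hu).continuousAt).continuousWithinAt
    · intro u hu
      rw [interior_Icc] at hu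
      exact ((hgderiv u ⟨hu.1.le, hu.2.le⟩).differentiableAt).differentiableWithinAt
    · intro x hx
      rw [interior_Icc] at hx
      have hx' : x ∈ Set.Icc (0:ℝ) t := ⟨hx.1.le, hx.2.le⟩
      rw [(hgderiv x hx').deriv]
      have hyx : 0 < y x := hpos x hx'
      have h1 : y' x ≤ -(c * y x ^ α) := by
        have := hineq x hx'.1 hyx; linarith
      have hne : y x ^ α ≠ 0 := (Real.rpow_pos_of_pos hyx α).ne'
      have hpow : y x ^ (1 - α - 1) = (y x ^ α)⁻¹ := by
        rw [show (1 - α - 1 : ℝ) = -α by ring, Real.rpow_neg hyx.le]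
      have hinvpos : 0 < (y x ^ α)⁻¹ := inv_pos.2 (Real.rpow_pos_of_pos hyx α)
      have h2 : y' x * (1 - α) * y x ^ (1 - α - 1)
          ≤ -(c * y x ^ α) * (1 - α) * (y x ^ α)⁻¹ := by
        rw [hpow]
        have := mul_le_mul_of_nonneg_right h1 h1α.le
        exact mul_le_mul_of_nonneg_right this hinvpos.le
      have h3 : -(c * y x ^ α) * (1 - α) * (y x ^ α)⁻¹ = -(c * (1 - α)) := by
        field_simp
      rw [h3] at h2
      linarith
  have hg0 : g 0 = y 0 ^ (1 - α) := by simp [hg]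
  have hgt : g t ≤ g 0 := hanti (Set.left_mem_Icc.2 ht0) (Set.right_mem_Icc.2 ht0) ht0
  have hTle : y 0 ^ (1 - α) ≤ c * (1 - α) * t := by
    rw [div_le_iff₀ (mul_pos hc h1α)] at ht
    linarith [ht]
  have hgtpos : 0 < y t ^ (1 - α) := Real.rpow_pos_of_pos hyt _
  have : y t ^ (1 - α) + c * (1 - α) * t ≤ y 0 ^ (1 - α) := by
    rw [hg0] at hgt; exact hgt
  linarith
end

section
/- Lyapunov derivative along closed-loop trajectories: under the closed-loop dynamics, with β := 2α/(1+α) and V(t) := (1/(2(1+β)))·∑_{i=1}^N ∑_{j=1}^N a_ij·|e_ij(t)|^{1+β} + (1/2)·∑_{i=1}^N v_i(t)², the function V is differentiable on [0,∞) and V'(t) = −(1/2)·∑_{i=1}^N ∑_{j=1}^N a_ij·|v_i(t) − v_j(t)|^{1+α} ≤ 0 for every t ≥ 0. -/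
/-- `sig(x)^α := sign(x) · |x|^α`. -/
noncomputable def sig (x α : ℝ) : ℝ := Real.sign x * |x| ^ α

lemma real_sign_mul_self (x : ℝ) : Real.sign x * x = |x| := by
  rcases lt_trichotomy x 0 with h | rfl | h
  · rw [Real.sign_of_neg h, abs_of_neg h]; ring
  · simp [Real.sign_zero]
  · rw [Real.sign_of_pos h, abs_of_pos h]; ring

lemma sig_neg (x r : ℝ) : sig (-x) r = - sig x r := by
  simp [sig, Real.sign_neg]

lemma sig_mul_self (x : ℝ) {r : ℝ} (hr : 0 < r) : sig x r * x = |x| ^ (1 + r) := by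
  rcases eq_or_ne x 0 with rfl | hx
  · simp [sig, Real.zero_rpow (by linarith : (1:ℝ) + r ≠ 0)]
  · have habs : (0:ℝ) < |x| := abs_pos.mpr hx
    calc Real.sign x * |x| ^ r * x = |x| ^ r * (Real.sign x * x) := by ring
    _ = |x| ^ r * |x| ^ (1:ℝ) := by rw [real_sign_mul_self, Real.rpow_one]
    _ = |x| ^ (1 + r) := by rw [← Real.rpow_add habs]; ring_nf

lemma abs_rpow_hasDerivAt (x : ℝ) {p : ℝ} (hp : 1 < p) :
    HasDerivAt (fun y : ℝ => |y| ^ p) (p * sig x (p - 1)) x := by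
  have h := hasDerivAt_abs_rpow x hp
  convert h using 1
  rcases eq_or_ne x 0 with rfl | hx
  · simp [sig]
  · have habs : (0:ℝ) < |x| := abs_pos.mpr hx
    have : |x| ^ (p - 2) * x = Real.sign x * |x| ^ (p - 1) := by
      calc |x| ^ (p - 2) * x = Real.sign x * (Real.sign x * x) * (|x| ^ (p - 2)) := by
            rcases Real.sign_apply_eq_of_ne_zero x hx with h' | h' <;> rw [h'] <;> ring
      _ = Real.sign x * (|x| ^ (1:ℝ) * |x| ^ (p - 2)) := by
            rw [real_sign_mul_self, Real.rpow_one]; ring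
      _ = Real.sign x * |x| ^ (p - 1) := by rw [← Real.rpow_add habs]; ring_nf
    rw [sig, mul_assoc, this]

lemma HasDerivAt.abs_rpow_comp {f : ℝ → ℝ} {f' x p : ℝ} (hp : 1 < p)
    (hf : HasDerivAt f f' x) :
    HasDerivAt (fun t => |f t| ^ p) (p * sig (f x) (p - 1) * f') x :=
  (abs_rpow_hasDerivAt (f x) hp).comp x hf

lemma sum_antisym {N : ℕ} (a f : Fin N → Fin N → ℝ)
    (hsym : ∀ i j, a i j = a j i) (hf : ∀ i j, f j i = - f i j) (g : Fin N → ℝ) :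
    ∑ i, ∑ j, a i j * f i j * g j = - ∑ i, ∑ j, a i j * f i j * g i := by
  calc ∑ i, ∑ j, a i j * f i j * g j = ∑ j, ∑ i, a i j * f i j * g j := Finset.sum_comm
  _ = ∑ i, ∑ j, a j i * f j i * g i := rfl
  _ = ∑ i, ∑ j, -(a i j * f i j * g i) := by
      refine Finset.sum_congr rfl fun i _ => Finset.sum_congr rfl fun j _ => ?_
      rw [hsym j i, hf]; ring
  _ = - ∑ i, ∑ j, a i j * f i j * g i := by
      simp [Finset.sum_neg_distrib]

/-- Lyapunov derivative along closed-loop trajectories: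
`V'(t) = −(1/2)·∑ᵢ∑ⱼ aᵢⱼ·|vᵢ(t)−vⱼ(t)|^{1+α} ≤ 0` for every `t ≥ 0`. -/
theorem lyapunov_derivative
    (N : ℕ) (G : SimpleGraph (Fin N)) [DecidableRel G.Adj]
    (a : Fin N → Fin N → ℝ) (ha : ∀ i j, a i j = if G.Adj i j then 1 else 0)
    (α : ℝ) (hα : α ∈ Set.Ioo (0 : ℝ) 1)
    (q : Fin N → ℝ) (pstar : Fin N → Fin N → ℝ)
    (hps : ∀ i j, pstar i j = q i - q j)
    (p v : Fin N → ℝ → ℝ)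
    (hdp : ∀ i, ∀ t : ℝ, 0 ≤ t → HasDerivAt (p i) (v i t) t)
    (hdv : ∀ i, ∀ t : ℝ, 0 ≤ t → HasDerivAt (v i)
      (-(∑ j, a i j * sig (p i t - p j t - pstar i j) (2 * α / (1 + α)))
        - ∑ j, a i j * sig (v i t - v j t) α) t)
    (β : ℝ) (hβ : β = 2 * α / (1 + α))
    (V : ℝ → ℝ)
    (hV : ∀ t : ℝ, V t =
      (1 / (2 * (1 + β))) * ∑ i, ∑ j, a i j * |p i t - p j t - pstar i j| ^ (1 + β)
        + (1 / 2) * ∑ i, (v i t) ^ 2) :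
    ∀ t : ℝ, 0 ≤ t →
      HasDerivAt V (-(1 / 2) * ∑ i, ∑ j, a i j * |v i t - v j t| ^ (1 + α)) t ∧
      -(1 / 2) * ∑ i, ∑ j, a i j * |v i t - v j t| ^ (1 + α) ≤ 0 := by
  simp only [← hβ] at hdv
  obtain ⟨hα0, hα1⟩ := hα
  have hβpos : 0 < β := by rw [hβ]; positivity
  have h1β : 1 < 1 + β := by linarith
  have h1βne : (1 : ℝ) + β ≠ 0 := by linarith
  have hasym : ∀ i j, a i j = a j i := fun i j => by
    rw [ha, ha]; exact if_congr (G.adj_comm i j) rfl rfl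
  have hanonneg : ∀ i j, 0 ≤ a i j := fun i j => by
    rw [ha]; split <;> norm_num
  intro t ht
  -- abbreviations
  set w : Fin N → ℝ := fun i => v i t with hw
  set E : Fin N → Fin N → ℝ := fun i j => p i t - p j t - pstar i j with hE
  set s : Fin N → Fin N → ℝ := fun i j => sig (E i j) β with hs
  set u : Fin N → Fin N → ℝ := fun i j => sig (w i - w j) α with hu
  set Z : ℝ := ∑ i, ∑ j, a i j * |w i - w j| ^ (1 + α) with hZdef
  -- nonnegativity part
  have hZnonneg : 0 ≤ Z :=
    Finset.sum_nonneg fun i _ => Finset.sum_nonneg fun j _ =>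
      mul_nonneg (hanonneg i j) (Real.rpow_nonneg (abs_nonneg _) _)
  have hineq : -(1 / 2) * Z ≤ 0 := by nlinarith
  refine ⟨?_, hineq⟩
  -- derivatives of the components
  have he : ∀ i j, HasDerivAt (fun r => p i r - p j r - pstar i j) (w i - w j) t :=
    fun i j => ((hdp i t ht).sub (hdp j t ht)).sub_const _
  have hterm1 : ∀ i j, HasDerivAt (fun r => a i j * |p i r - p j r - pstar i j| ^ (1 + β))
      (a i j * ((1 + β) * s i j * (w i - w j))) t := by
    intro i j
    have := (HasDerivAt.abs_rpow_comp h1β (he i j)).const_mul (a i j)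
    simpa [hs, hE, show (1 : ℝ) + β - 1 = β by ring] using this
  have hsum1 : HasDerivAt
      (fun r => ∑ i, ∑ j, a i j * |p i r - p j r - pstar i j| ^ (1 + β))
      (∑ i, ∑ j, a i j * ((1 + β) * s i j * (w i - w j))) t :=
    HasDerivAt.fun_sum fun i _ => HasDerivAt.fun_sum fun j _ => hterm1 i j
  have hterm2 : ∀ i, HasDerivAt (fun r => (v i r) ^ 2)
      (2 * w i * (-(∑ j, a i j * s i j) - ∑ j, a i j * u i j)) t := by
    intro i
    have := (hdv i t ht).fun_pow 2
    simpa [hw, hs, hu, hE, mul_comm] using this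
  have hsum2 : HasDerivAt (fun r => ∑ i, (v i r) ^ 2)
      (∑ i, 2 * w i * (-(∑ j, a i j * s i j) - ∑ j, a i j * u i j)) t :=
    HasDerivAt.fun_sum fun i _ => hterm2 i
  have hVd : HasDerivAt V
      ((1 / (2 * (1 + β))) * ∑ i, ∑ j, a i j * ((1 + β) * s i j * (w i - w j))
        + (1 / 2) * ∑ i, 2 * w i * (-(∑ j, a i j * s i j) - ∑ j, a i j * u i j)) t := by
    have hVfun : V = fun r =>
        (1 / (2 * (1 + β))) * ∑ i, ∑ j, a i j * |p i r - p j r - pstar i j| ^ (1 + β)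
          + (1 / 2) * ∑ i, (v i r) ^ 2 := funext hV
    rw [hVfun]
    exact (hsum1.const_mul _).add (hsum2.const_mul _)
  -- algebraic identification of the derivative
  set X1 : ℝ := ∑ i, ∑ j, a i j * s i j * w i with hX1def
  set X2 : ℝ := ∑ i, ∑ j, a i j * s i j * w j with hX2def
  set Y1 : ℝ := ∑ i, ∑ j, a i j * u i j * w i with hY1def
  set Y2 : ℝ := ∑ i, ∑ j, a i j * u i j * w j with hY2def
  have hsanti : ∀ i j, s j i = - s i j := by
    intro i j
    have : E j i = -(E i j) := by simp only [hE, hps]; ring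
    show sig (E j i) β = -(sig (E i j) β)
    rw [this, sig_neg]
  have huanti : ∀ i j, u j i = - u i j := by
    intro i j
    have : w j - w i = -(w i - w j) := by ring
    show sig (w j - w i) α = -(sig (w i - w j) α)
    rw [this, sig_neg]
  have hX2 : X2 = -X1 := sum_antisym a s hasym hsanti w
  have hY2 : Y2 = -Y1 := sum_antisym a u hasym huanti w
  have hC : ∀ i j, u i j * (w i - w j) = |w i - w j| ^ (1 + α) :=
    fun i j => sig_mul_self _ hα0
  have hZ : Y1 - Y2 = Z := by
    calc Y1 - Y2 = ∑ i, ∑ j, (a i j * u i j * w i - a i j * u i j * w j) := by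
          simp [hY1def, hY2def, Finset.sum_sub_distrib]
    _ = Z := by
        refine Finset.sum_congr rfl fun i _ => Finset.sum_congr rfl fun j _ => ?_
        rw [show a i j * u i j * w i - a i j * u i j * w j
            = a i j * (u i j * (w i - w j)) by ring, hC i j]
  have hexp1 : ∑ i, ∑ j, a i j * ((1 + β) * s i j * (w i - w j))
      = (1 + β) * X1 - (1 + β) * X2 := by
    calc ∑ i, ∑ j, a i j * ((1 + β) * s i j * (w i - w j))
        = ∑ i, ∑ j, ((1 + β) * (a i j * s i j * w i) - (1 + β) * (a i j * s i j * w j)) := by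
          refine Finset.sum_congr rfl fun i _ => Finset.sum_congr rfl fun j _ => ?_
          ring
    _ = (1 + β) * X1 - (1 + β) * X2 := by
          simp [Finset.sum_sub_distrib, ← Finset.mul_sum, hX1def, hX2def]
  have hexp2 : ∑ i, 2 * w i * (-(∑ j, a i j * s i j) - ∑ j, a i j * u i j)
      = -2 * X1 + -2 * Y1 := by
    calc ∑ i, 2 * w i * (-(∑ j, a i j * s i j) - ∑ j, a i j * u i j)
        = ∑ i, (-2 * ∑ j, a i j * s i j * w i + -2 * ∑ j, a i j * u i j * w i) := by
          refine Finset.sum_congr rfl fun i _ => ?_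
          rw [show ∑ j, a i j * s i j * w i = (∑ j, a i j * s i j) * w i from
            (Finset.sum_mul _ _ _).symm,
            show ∑ j, a i j * u i j * w i = (∑ j, a i j * u i j) * w i from
            (Finset.sum_mul _ _ _).symm]
          ring
    _ = -2 * X1 + -2 * Y1 := by
          simp [Finset.sum_add_distrib, ← Finset.mul_sum, hX1def, hY1def]
  have hfinal : (1 / (2 * (1 + β))) * ∑ i, ∑ j, a i j * ((1 + β) * s i j * (w i - w j))
      + (1 / 2) * ∑ i, 2 * w i * (-(∑ j, a i j * s i j) - ∑ j, a i j * u i j)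
      = -(1 / 2) * Z := by
    rw [hexp1, hexp2, hX2, ← hZ, hY2]
    field_simp
    ring
  rw [← hfinal]
  exact hVd
end
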